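/- arXiv:2601.21529 — 2 statements merged into one kernel-verified Lean document; each statement's English description precedes it below -/
import Mathlib

section
/- Let κ > 0, let w ∈ ℝ^D be nonzero, and let b ∈ ℝ. Define v = (v₁, v̄) ∈ ℝ^{D+1} by v₁ = ‖w‖_E·sinh(−√κ·b/‖w‖_E) and v̄ = cosh(−√κ·b/‖w‖_E)·w. Then: (i) v ∘ v = −v₁² + ‖v̄‖_E² = ‖w‖_E² > 0; (ii) w = (√(v ∘ v)/‖v̄‖_E)·v̄; and (iii) b = −(√(v ∘ v)/√κ)·arcsinh(v₁/√(v ∘ v)). In particular, the map (w, b) ↦ v is invertible on the set where ‖w‖_E > 0. -/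
/-- The Lorentz (Minkowski) inner product on ambient space `ℝ^{D+1}`:
`x ∘ y = −x₁y₁ + ⟨x̄, ȳ⟩_E`, where index `0` is the time coordinate. -/
noncomputable def lprod {D : ℕ} (x y : Fin (D + 1) → ℝ) : ℝ :=
  -(x 0 * y 0) + ∑ i : Fin D, x i.succ * y i.succ

/-- The hyperboloid (Lorentz model) of curvature `−κ`:
`L_κ^D = {z : z ∘ z = −1/κ, z₁ > 0}`. -/
noncomputable def onHyperboloid {D : ℕ} (κ : ℝ) (x : Fin (D + 1) → ℝ) : Prop :=
  lprod x x = -(1 / κ) ∧ 0 < x 0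

/-- The real inverse hyperbolic cosine, `arcosh t = log (t + √(t² − 1))`. -/
noncomputable def arcosh (t : ℝ) : ℝ := Real.log (t + Real.sqrt (t ^ 2 - 1))

/-- Geodesic distance in the Lorentz model:
`d(x, y) = (1/√κ)·arccosh(−κ(x ∘ y))`. -/
noncomputable def ldist {D : ℕ} (κ : ℝ) (x y : Fin (D + 1) → ℝ) : ℝ :=
  (1 / Real.sqrt κ) * arcosh (-(κ * lprod x y))

/-- The Euclidean norm of a vector in `ℝ^n`. -/
noncomputable def euclNorm {n : ℕ} (v : Fin n → ℝ) : ℝ := Real.sqrt (∑ j, v j ^ 2)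

/-! With `t = -√κ b / ‖w‖`, the identity `cosh² t - sinh² t = 1` gives `v ∘ v = ‖w‖²` and
`‖v̄‖ = cosh t · ‖w‖`, so `w = (‖w‖ / ‖v̄‖) v̄` and `v₁ / ‖w‖ = sinh t`, from which `arsinh` returns
`t` and hence `b`. These formulas read `(w, b)` off `v` alone, which gives injectivity. -/

lemma euclNorm_nonneg {n : ℕ} (w : Fin n → ℝ) : 0 ≤ euclNorm w := Real.sqrt_nonneg _

lemma sq_euclNorm {n : ℕ} (w : Fin n → ℝ) : euclNorm w ^ 2 = ∑ j, w j ^ 2 :=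
  Real.sq_sqrt (Finset.sum_nonneg fun _ _ => sq_nonneg _)

lemma euclNorm_pos {n : ℕ} {w : Fin n → ℝ} (hw : w ≠ 0) : 0 < euclNorm w := by
  obtain ⟨j, hj⟩ := Function.ne_iff.1 hw
  exact Real.sqrt_pos.2 <|
    Finset.sum_pos' (fun _ _ => sq_nonneg _) ⟨j, Finset.mem_univ j, sq_pos_of_ne_zero hj⟩

lemma euclNorm_const_mul {n : ℕ} (c : ℝ) (w : Fin n → ℝ) :
    euclNorm (fun i => c * w i) = |c| * euclNorm w := by
  simp only [euclNorm, mul_pow, ← Finset.mul_sum, Real.sqrt_mul (sq_nonneg c),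
    Real.sqrt_sq_eq_abs]

lemma lprod_self {D : ℕ} (v : Fin (D + 1) → ℝ) :
    lprod v v = -(v 0) ^ 2 + euclNorm (fun i : Fin D => v i.succ) ^ 2 := by
  rw [lprod, sq_euclNorm]
  simp only [sq]

section Transport

variable {D : ℕ} {w : Fin D → ℝ} {t : ℝ} {v : Fin (D + 1) → ℝ}

lemma euclNorm_spatial_of_transport (hvs : ∀ i : Fin D, v i.succ = Real.cosh t * w i) :
    euclNorm (fun i : Fin D => v i.succ) = Real.cosh t * euclNorm w := by
  rw [funext hvs, euclNorm_const_mul, abs_of_pos (Real.cosh_pos t)]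

lemma lprod_self_of_transport (hv0 : v 0 = euclNorm w * Real.sinh t)
    (hvs : ∀ i : Fin D, v i.succ = Real.cosh t * w i) :
    lprod v v = euclNorm w ^ 2 := by
  rw [lprod_self, euclNorm_spatial_of_transport hvs, hv0]
  linear_combination euclNorm w ^ 2 * Real.cosh_sq_sub_sinh_sq t

lemma sqrt_lprod_self_of_transport (hv0 : v 0 = euclNorm w * Real.sinh t)
    (hvs : ∀ i : Fin D, v i.succ = Real.cosh t * w i) :
    Real.sqrt (lprod v v) = euclNorm w := by
  rw [lprod_self_of_transport hv0 hvs, Real.sqrt_sq (euclNorm_nonneg w)]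

lemma eq_mul_spatial_of_transport (hw : w ≠ 0) (hv0 : v 0 = euclNorm w * Real.sinh t)
    (hvs : ∀ i : Fin D, v i.succ = Real.cosh t * w i) (i : Fin D) :
    w i = (Real.sqrt (lprod v v) / euclNorm (fun j : Fin D => v j.succ)) * v i.succ := by
  have := (euclNorm_pos hw).ne'
  have := (Real.cosh_pos t).ne'
  rw [sqrt_lprod_self_of_transport hv0 hvs, euclNorm_spatial_of_transport hvs, hvs i]
  field_simp

lemma arsinh_time_of_transport (hw : w ≠ 0) (hv0 : v 0 = euclNorm w * Real.sinh t)
    (hvs : ∀ i : Fin D, v i.succ = Real.cosh t * w i) :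
    Real.arsinh (v 0 / Real.sqrt (lprod v v)) = t := by
  rw [sqrt_lprod_self_of_transport hv0 hvs, hv0, mul_div_cancel_left₀ _ (euclNorm_pos hw).ne',
    Real.arsinh_sinh]

lemma bias_eq_of_transport {κ b : ℝ} (hκ : 0 < κ) (hw : w ≠ 0)
    (hv0 : v 0 = euclNorm w * Real.sinh (-(Real.sqrt κ * b) / euclNorm w))
    (hvs : ∀ i : Fin D, v i.succ = Real.cosh (-(Real.sqrt κ * b) / euclNorm w) * w i) :
    b = -(Real.sqrt (lprod v v) / Real.sqrt κ) * Real.arsinh (v 0 / Real.sqrt (lprod v v)) := by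
  have := (euclNorm_pos hw).ne'
  have := (Real.sqrt_pos.2 hκ).ne'
  rw [arsinh_time_of_transport hw hv0 hvs, sqrt_lprod_self_of_transport hv0 hvs]
  field_simp

end Transport

/-- For nonzero `w` and bias `b`, the transported vector `v` with
`v₁ = ‖w‖·sinh(−√κ·b/‖w‖)` and `v̄ = cosh(−√κ·b/‖w‖)·w` is spacelike with
`v ∘ v = ‖w‖²`, and `(w, b)` can be recovered from `v`:
`w = (√(v ∘ v)/‖v̄‖)·v̄` and `b = −(√(v ∘ v)/√κ)·arcsinh(v₁/√(v ∘ v))`.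
In particular, the map `(w, b) ↦ v` is invertible on the set where `‖w‖ > 0`. -/
theorem cache_inverse (D : ℕ) (κ : ℝ) (hκ : 0 < κ)
    (w : Fin D → ℝ) (hw : w ≠ 0) (b : ℝ) (v : Fin (D + 1) → ℝ)
    (hv0 : v 0 = euclNorm w * Real.sinh (-(Real.sqrt κ * b) / euclNorm w))
    (hvs : ∀ i : Fin D, v i.succ = Real.cosh (-(Real.sqrt κ * b) / euclNorm w) * w i) :
    (lprod v v = -(v 0) ^ 2 + euclNorm (fun i : Fin D => v i.succ) ^ 2 ∧
      lprod v v = euclNorm w ^ 2 ∧ 0 < lprod v v) ∧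
    (∀ i : Fin D,
      w i = (Real.sqrt (lprod v v) / euclNorm (fun j : Fin D => v j.succ)) * v i.succ) ∧
    b = -(Real.sqrt (lprod v v) / Real.sqrt κ) *
          Real.arsinh (v 0 / Real.sqrt (lprod v v)) ∧
    (∀ (w' : Fin D → ℝ) (b' : ℝ), w' ≠ 0 →
      v 0 = euclNorm w' * Real.sinh (-(Real.sqrt κ * b') / euclNorm w') →
      (∀ i : Fin D, v i.succ = Real.cosh (-(Real.sqrt κ * b') / euclNorm w') * w' i) →
      w' = w ∧ b' = b) := by
  have hlv := lprod_self_of_transport hv0 hvs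
  refine ⟨⟨lprod_self v, hlv, hlv ▸ pow_pos (euclNorm_pos hw) 2⟩,
    eq_mul_spatial_of_transport hw hv0 hvs, bias_eq_of_transport hκ hw hv0 hvs, ?_⟩
  intro w' b' hw' hv0' hvs'
  exact ⟨funext fun i => (eq_mul_spatial_of_transport hw' hv0' hvs' i).trans
      (eq_mul_spatial_of_transport hw hv0 hvs i).symm,
    (bias_eq_of_transport hκ hw' hv0' hvs').trans (bias_eq_of_transport hκ hw hv0 hvs).symm⟩
end

section
/- Let κ > 0, let w ∈ ℝ^D have ‖w‖_E = 1, and let b ∈ ℝ. Let v = (sinh(−√κ·b), cosh(−√κ·b)·w) ∈ ℝ^{D+1} and let o = (1/√κ, 0, …, 0) be the origin of L_κ^D. Define the single-neuron FGG-LNN output with identity activation applied to input o as the point y = (y₁, ȳ) ∈ ℝ² with ȳ = o ∘ v and y₁ = √(1/κ + ȳ²). Then ȳ = (1/√κ)·sinh(√κ·b), y₁ = (1/√κ)·cosh(√κ·b), y ∈ L_κ^1, and the hyperbolic distance from y to the origin of L_κ^1 equals |b|. In particular, the hyperbolic norm of the output grows linearly in the bias parameter b. -/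
noncomputable def lorentzOrigin (D : ℕ) (κ : ℝ) : Fin (D + 1) → ℝ :=
  Fin.cons (1 / Real.sqrt κ) 0

noncomputable def liftToHyperboloid {D : ℕ} (κ : ℝ) (x : Fin D → ℝ) : Fin (D + 1) → ℝ :=
  Fin.cons (Real.sqrt (1 / κ + ∑ i, x i ^ 2)) x

lemma lprod_cons {D : ℕ} (a c : ℝ) (x y : Fin D → ℝ) :
    lprod (Fin.cons a x) (Fin.cons c y) = -(a * c) + ∑ i, x i * y i := by
  simp [lprod]

lemma lprod_comm {D : ℕ} (x y : Fin (D + 1) → ℝ) : lprod x y = lprod y x := by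
  simp only [lprod, mul_comm]

lemma lorentzOrigin_lprod {D : ℕ} (κ : ℝ) (v : Fin (D + 1) → ℝ) :
    lprod (lorentzOrigin D κ) v = -(1 / Real.sqrt κ * v 0) := by
  rw [← Fin.cons_self_tail v, lorentzOrigin, lprod_cons]
  simp

lemma onHyperboloid_liftToHyperboloid {D : ℕ} {κ : ℝ} (hκ : 0 < κ) (x : Fin D → ℝ) :
    onHyperboloid κ (liftToHyperboloid κ x) := by
  have hpos : 0 < 1 / κ + ∑ i, x i ^ 2 := by positivity
  refine ⟨?_, by simpa [liftToHyperboloid] using hpos⟩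
  rw [liftToHyperboloid, lprod_cons, Real.mul_self_sqrt hpos.le]
  simp only [sq]
  ring

lemma ldist_lorentzOrigin {D : ℕ} (κ : ℝ) (y : Fin (D + 1) → ℝ) :
    ldist κ y (lorentzOrigin D κ) = 1 / Real.sqrt κ * arcosh (Real.sqrt κ * y 0) := by
  rw [ldist, lprod_comm, lorentzOrigin_lprod, mul_neg, neg_neg, ← mul_assoc, mul_one_div,
    Real.div_sqrt]

lemma arcosh_cosh (t : ℝ) : arcosh (Real.cosh t) = |t| := by
  have hsq : Real.cosh t ^ 2 - 1 = Real.sinh t ^ 2 := by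
    rw [Real.cosh_sq]
    ring
  have hexp : Real.cosh t + |Real.sinh t| = Real.exp |t| := by
    rw [← Real.cosh_abs t, Real.abs_sinh t, Real.cosh_add_sinh]
  rw [arcosh, hsq, Real.sqrt_sq_eq_abs, hexp, Real.log_exp]

lemma sqrt_inv_add_sq_sinh {κ : ℝ} (hκ : 0 < κ) (t : ℝ) :
    Real.sqrt (1 / κ + (1 / Real.sqrt κ * Real.sinh t) ^ 2) =
      1 / Real.sqrt κ * Real.cosh t := by
  have hsq : 1 / κ + (1 / Real.sqrt κ * Real.sinh t) ^ 2 =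
      (1 / Real.sqrt κ * Real.cosh t) ^ 2 := by
    rw [mul_pow, mul_pow, div_pow, Real.sq_sqrt hκ.le, Real.cosh_sq]
    ring
  rw [hsq, Real.sqrt_sq (by positivity)]

theorem fgg_lnn_linear_growth_general (D : ℕ) (κ : ℝ) (hκ : 0 < κ)
    (w : Fin D → ℝ) (b : ℝ)
    (v o : Fin (D + 1) → ℝ)
    (hv : v = Fin.cons (Real.sinh (-(Real.sqrt κ * b)))
        (fun i : Fin D => Real.cosh (-(Real.sqrt κ * b)) * w i))
    (ho : o = Fin.cons (1 / Real.sqrt κ) (0 : Fin D → ℝ))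
    (ybar : ℝ) (hybar : ybar = lprod o v)
    (y : Fin 2 → ℝ) (hy : y = ![Real.sqrt (1 / κ + ybar ^ 2), ybar])
    (o1 : Fin 2 → ℝ) (ho1 : o1 = ![1 / Real.sqrt κ, 0]) :
    ybar = (1 / Real.sqrt κ) * Real.sinh (Real.sqrt κ * b) ∧
    y 0 = (1 / Real.sqrt κ) * Real.cosh (Real.sqrt κ * b) ∧
    onHyperboloid (D := 1) κ y ∧
    ldist (D := 1) κ y o1 = |b| := by
  have hybar' : ybar = 1 / Real.sqrt κ * Real.sinh (Real.sqrt κ * b) := by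
    rw [hybar, ho, ← lorentzOrigin, lorentzOrigin_lprod, hv, Fin.cons_zero, Real.sinh_neg,
      mul_neg, neg_neg]
  have hy0 : y 0 = 1 / Real.sqrt κ * Real.cosh (Real.sqrt κ * b) := by
    rw [hy, Matrix.cons_val_zero, hybar', sqrt_inv_add_sq_sinh hκ]
  have hlift : y = liftToHyperboloid κ ![ybar] := by
    rw [hy, liftToHyperboloid, Fin.sum_univ_one]
    ext i
    fin_cases i <;> rfl
  have ho1' : o1 = lorentzOrigin 1 κ := by
    rw [ho1, lorentzOrigin]
    ext i
    fin_cases i <;> rfl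
  refine ⟨hybar', hy0, hlift ▸ onHyperboloid_liftToHyperboloid hκ _, ?_⟩
  have hsκ : 0 < Real.sqrt κ := Real.sqrt_pos.mpr hκ
  rw [ho1', ldist_lorentzOrigin, hy0, ← mul_assoc, mul_one_div_cancel hsκ.ne', one_mul,
    arcosh_cosh, abs_mul, abs_of_pos hsκ, ← mul_assoc, one_div_mul_cancel hsκ.ne', one_mul]

/-- For a unit weight `w` and bias `b`, the single-neuron FGG-LNN layer
with identity activation applied to the origin `o` outputs
`y = (√(1/κ + ȳ²), ȳ)` with `ȳ = o ∘ v`; then `ȳ = (1/√κ)·sinh(√κ·b)`,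
`y₁ = (1/√κ)·cosh(√κ·b)`, `y ∈ L_κ^1`, and the hyperbolic distance from `y` to the origin
of `L_κ^1` equals `|b|`: the hyperbolic norm of the output grows linearly in `b`. -/
theorem fgg_lnn_linear_growth (D : ℕ) (hD : 1 ≤ D) (κ : ℝ) (hκ : 0 < κ)
    (w : Fin D → ℝ) (hw : euclNorm w = 1) (b : ℝ)
    (v o : Fin (D + 1) → ℝ)
    (hv : v = Fin.cons (Real.sinh (-(Real.sqrt κ * b)))
        (fun i : Fin D => Real.cosh (-(Real.sqrt κ * b)) * w i))
    (ho : o = Fin.cons (1 / Real.sqrt κ) (0 : Fin D → ℝ))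
    (ybar : ℝ) (hybar : ybar = lprod o v)
    (y : Fin 2 → ℝ) (hy : y = ![Real.sqrt (1 / κ + ybar ^ 2), ybar])
    (o1 : Fin 2 → ℝ) (ho1 : o1 = ![1 / Real.sqrt κ, 0]) :
    ybar = (1 / Real.sqrt κ) * Real.sinh (Real.sqrt κ * b) ∧
    y 0 = (1 / Real.sqrt κ) * Real.cosh (Real.sqrt κ * b) ∧
    onHyperboloid (D := 1) κ y ∧
    ldist (D := 1) κ y o1 = |b| :=
  fgg_lnn_linear_growth_general D κ hκ w b v o hv ho ybar hybar y hy o1 ho1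
end
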